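/- arXiv:2507.04427 — 4 statements merged into one kernel-verified Lean document; each statement's English description precedes it below -/
import Mathlib

section
/- Let either θ ∈ [0,1] and a ≥ 0, or θ ∈ [-1,0) and -θ ≤ a ≤ -1/θ. Then there exists ε > 0 such that for all complex z with |z| < ε one has (∑_{n=0}^∞ p_n^a(θ) z^n) · z · E(θ, -z/(1+a)) = E(θ, a·z/(1+a)) − E(θ, -z/(1+a)); i.e., the generating function of the persistence probabilities equals [E(θ, az/(1+a)) − E(θ, -z/(1+a))] / [z·E(θ, -z/(1+a))]. -/
open MeasureTheory Set

/-- Persistence probability `p_n^a(θ)` for the MA(1) process with uniform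
innovations on `[-a,1]`: for `n ≥ 1` it is the normalized volume of
`{x ∈ [-a,1]^{n+1} : x_{i+1} ≥ θ x_i for all 1 ≤ i ≤ n}`, and `p_0^a(θ) := 1`. -/
noncomputable def persprob (a θ : ℝ) : ℕ → ℝ
  | 0 => 1
  | n + 1 =>
    (volume {x : Fin (n + 2) → ℝ |
        (∀ i, x i ∈ Icc (-a) 1) ∧
        ∀ i : Fin (n + 1), θ * x i.castSucc ≤ x i.succ}).toReal / (1 + a) ^ (n + 2)

/-- The deformed exponential function `E(r,z) = ∑ r^{n(n-1)/2} z^n / n!`. -/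
noncomputable def defExp (r z : ℂ) : ℂ :=
  ∑' n : ℕ, r ^ (n * (n - 1) / 2) * z ^ n / (n.factorial : ℂ)

/-! ### Auxiliary sequences and polynomials -/

noncomputable def cc (a θ : ℝ) (k : ℕ) : ℝ :=
  (-1) ^ k * θ ^ (k * (k - 1) / 2) / ((1 + a) ^ k * k.factorial)

noncomputable def dd (a θ : ℝ) (m : ℕ) : ℝ :=
  θ ^ (m * (m - 1) / 2) * (a ^ m - (-1) ^ m) / ((1 + a) ^ m * m.factorial)

noncomputable def bb (a θ : ℝ) : ℕ → ℝ
  | 0 => 1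
  | n + 1 => ∑ k ∈ Finset.range (n + 1), (-cc a θ (k + 1)) * bb a θ (n - k)
decreasing_by exact Nat.lt_succ_of_le (Nat.sub_le n k)

lemma bb_zero (a θ : ℝ) : bb a θ 0 = 1 := by rw [bb]

lemma bb_succ (a θ : ℝ) (n : ℕ) :
    bb a θ (n + 1) = ∑ k ∈ Finset.range (n + 1), (-cc a θ (k + 1)) * bb a θ (n - k) := by
  rw [bb]

noncomputable def KK (a θ : ℝ) (n k : ℕ) : ℝ :=
  (-1) ^ k * θ ^ ((k + 1) * k / 2) / ((1 + a) ^ k * k.factorial) * bb a θ (n - k)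

noncomputable def gg (a θ : ℝ) (n : ℕ) (x : ℝ) : ℝ :=
  ∑ k ∈ Finset.range (n + 1), KK a θ n k * x ^ k

noncomputable def pF (a θ : ℝ) (n : ℕ) : ℝ :=
  ∑ k ∈ Finset.range (n + 1), dd a θ (k + 1) * bb a θ (n - k)

lemma cc_zero (a θ : ℝ) : cc a θ 0 = 1 := by simp [cc]

lemma conv_bc (a θ : ℝ) (N : ℕ) :
    ∑ k ∈ Finset.range (N + 1), bb a θ k * cc a θ (N - k) = if N = 0 then 1 else 0 := by
  cases N with
  | zero => simp [bb, cc]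
  | succ n =>
    rw [Finset.sum_range_succ]
    simp only [Nat.sub_self, cc_zero, mul_one, Nat.succ_ne_zero, if_false]
    rw [bb_succ]
    rw [← Finset.sum_range_reflect (fun k => bb a θ k * cc a θ (n + 1 - k)) (n + 1)]
    rw [← Finset.sum_add_distrib]
    apply Finset.sum_eq_zero
    intro k hk
    rw [Finset.mem_range] at hk
    have h1 : n + 1 - 1 - k = n - k := by omega
    have h2 : n + 1 - (n - k) = k + 1 := by omega
    rw [h1, h2]
    ring

lemma star (a θ : ℝ) (N : ℕ) :
    ∑ k ∈ Finset.range (N + 1), pF a θ k * cc a θ (N - k) = dd a θ (N + 1) := by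
  set B := PowerSeries.mk (bb a θ)
  set C := PowerSeries.mk (cc a θ)
  set P := PowerSeries.mk (pF a θ)
  set D := PowerSeries.mk (fun m => dd a θ (m + 1))
  have hBC : B * C = 1 := by
    ext n
    rw [PowerSeries.coeff_mul, Finset.Nat.sum_antidiagonal_eq_sum_range_succ_mk]
    simp only [B, C, PowerSeries.coeff_mk, PowerSeries.coeff_one]
    exact conv_bc a θ n
  have hP : P = D * B := by
    ext n
    rw [PowerSeries.coeff_mul, Finset.Nat.sum_antidiagonal_eq_sum_range_succ_mk]
    simp only [P, D, B, PowerSeries.coeff_mk]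
    rfl
  have key : P * C = D := by
    rw [hP, mul_assoc, hBC, mul_one]
  have := congrArg (PowerSeries.coeff N) key
  rw [PowerSeries.coeff_mul, Finset.Nat.sum_antidiagonal_eq_sum_range_succ_mk] at this
  simpa [P, C, D] using this

/-! ### Integral recursion for `gg` -/

lemma gg_integral (a θ : ℝ) (n : ℕ) (s t : ℝ) :
    ∫ y in s..t, gg a θ n y
      = ∑ k ∈ Finset.range (n + 1), KK a θ n k * ((t ^ (k+1) - s ^ (k+1)) / (k+1)) := by
  unfold gg
  rw [intervalIntegral.integral_finset_sum]
  · refine Finset.sum_congr rfl fun k _ => ?_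
    rw [intervalIntegral.integral_const_mul, integral_pow]
  · intro k _
    exact (continuous_const.mul (continuous_pow k)).intervalIntegrable _ _

lemma triangle (k : ℕ) : (k + 2) * (k + 1) / 2 = (k + 1) * k / 2 + (k + 1) := by
  have := Nat.triangle_succ (k + 1)
  simpa using this

lemma gg_cont (a θ : ℝ) (n : ℕ) : Continuous (gg a θ n) := by
  unfold gg
  exact continuous_finset_sum _ fun k _ => continuous_const.mul (continuous_pow k)

lemma gg_rec (a θ : ℝ) (ha : (1:ℝ) + a ≠ 0) (n : ℕ) (x : ℝ) :
    gg a θ (n + 1) x = (1 / (1 + a)) * ∫ y in (θ * x)..1, gg a θ n y := by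
  rw [gg_integral, Finset.mul_sum]
  have hterm : ∀ k ∈ Finset.range (n + 1),
      1 / (1 + a) * (KK a θ n k * ((1 ^ (k+1) - (θ * x) ^ (k+1)) / (k+1)))
        = (-cc a θ (k + 1)) * bb a θ (n - k) + KK a θ (n + 1) (k + 1) * x ^ (k + 1) := by
    intro k _
    have hfac : ((k+1).factorial : ℝ) = (k+1) * (k.factorial : ℝ) := by
      push_cast [Nat.factorial_succ]; ring
    have hfk : (k.factorial : ℝ) ≠ 0 := Nat.cast_ne_zero.2 k.factorial_ne_zero
    have hk1 : ((k:ℝ) + 1) ≠ 0 := by positivity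
    unfold KK cc
    have hsub : n + 1 - (k + 1) = n - k := by omega
    rw [hsub, triangle, pow_add]
    simp only [Nat.succ_sub_one, one_pow]
    rw [hfac]
    field_simp
    ring
  rw [Finset.sum_congr rfl hterm, Finset.sum_add_distrib, ← bb_succ]
  unfold gg
  rw [Finset.sum_range_succ']
  have : KK a θ (n+1) 0 * x ^ 0 = bb a θ (n+1) := by simp [KK]
  rw [this]; ring

lemma gg_zero_eq (a θ : ℝ) (x : ℝ) : gg a θ 0 x = 1 := by
  simp [gg, KK, bb_zero]

lemma gg_one_eq (a θ : ℝ) (ha : (1:ℝ) + a ≠ 0) (t : ℝ) :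
    gg a θ 1 t = (1 - θ * t) / (1 + a) := by
  rw [gg_rec a θ ha 0 t]
  rw [intervalIntegral.integral_congr (g := fun _ => (1:ℝ)) (fun y _ => gg_zero_eq a θ y)]
  simp
  ring

lemma pF_integral (a θ : ℝ) (ha : (1:ℝ) + a ≠ 0) (n : ℕ) :
    ∫ x in (-a)..1, gg a θ n x = (1 + a) * pF a θ n := by
  rw [gg_integral]
  unfold pF
  rw [Finset.mul_sum]
  refine Finset.sum_congr rfl fun k _ => ?_
  have hfac : ((k+1).factorial : ℝ) = (k+1) * (k.factorial : ℝ) := by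
    push_cast [Nat.factorial_succ]; ring
  have hfk : (k.factorial : ℝ) ≠ 0 := Nat.cast_ne_zero.2 k.factorial_ne_zero
  have hk1 : ((k:ℝ) + 1) ≠ 0 := by positivity
  have hsq : ((-1:ℝ)) ^ k * (-1) ^ k = 1 := by
    rw [← pow_add]; exact Even.neg_one_pow ⟨k, rfl⟩
  have key : ((-1:ℝ)) ^ k * (1 - (-a) ^ (k+1)) = a ^ (k+1) - (-1) ^ (k+1) := by
    rw [neg_pow]
    linear_combination a ^ (k+1) * hsq
  unfold KK dd
  have hexp : (k + 1) * ((k + 1) - 1) / 2 = (k + 1) * k / 2 := by simp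
  rw [hexp, hfac]
  have expand : (-1:ℝ) ^ k * θ ^ ((k + 1) * k / 2) / ((1 + a) ^ k * ↑k.factorial) *
        bb a θ (n - k) * ((1 ^ (k + 1) - (-a) ^ (k + 1)) / (↑k + 1))
      = θ ^ ((k + 1) * k / 2) * ((-1:ℝ) ^ k * (1 - (-a) ^ (k+1))) * bb a θ (n - k) /
        ((1 + a) ^ k * (↑k.factorial * (↑k + 1))) := by
    field_simp
    ring
  rw [expand, key]
  field_simp
  ring

lemma gg_nonneg (a θ : ℝ) (ha : 0 < 1 + a)
    (hmap : ∀ x ∈ Icc (-a) 1, θ * x ∈ Icc (-a) 1) :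
    ∀ n, ∀ x, θ * x ∈ Icc (-a) 1 → 0 ≤ gg a θ n x := by
  intro n
  induction n with
  | zero => intro x _; rw [gg_zero_eq]; norm_num
  | succ n ih =>
    intro x hx
    rw [gg_rec a θ ha.ne' n x]
    apply mul_nonneg (by positivity)
    apply intervalIntegral.integral_nonneg hx.2
    intro y hy
    exact ih y (hmap y ⟨le_trans hx.1 hy.1, hy.2⟩)

/-! ### Measure-theoretic identification -/

def Tset (a θ : ℝ) (n : ℕ) (t : ℝ) : Set (Fin (n + 1) → ℝ) :=
  {y | (∀ i, y i ∈ Icc (-a) 1) ∧ θ * t ≤ y 0 ∧ ∀ j : Fin n, θ * y j.castSucc ≤ y j.succ}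

lemma vol_Tset_zero (a θ t : ℝ) (ht : θ * t ∈ Icc (-a) 1) :
    volume (Tset a θ 0 t) = ENNReal.ofReal (1 - θ * t) := by
  have hset : Tset a θ 0 t = (MeasurableEquiv.funUnique (Fin 1) ℝ) ⁻¹' (Icc (θ * t) 1) := by
    ext y
    simp only [Tset, Set.mem_setOf_eq, MeasurableEquiv.funUnique_apply, Set.mem_preimage,
      Set.mem_Icc]
    constructor
    · rintro ⟨h1, h2, -⟩
      exact ⟨h2, (h1 0).2⟩
    · rintro ⟨h1, h2⟩
      refine ⟨fun i => ?_, h1, fun j => j.elim0⟩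
      have : i = 0 := Fin.fin_one_eq_zero i
      rw [this]
      exact ⟨le_trans ht.1 h1, h2⟩
  rw [hset]
  exact ((volume_preserving_funUnique (Fin 1) ℝ).measure_preimage
    measurableSet_Icc.nullMeasurableSet).trans Real.volume_Icc

lemma piFinSuccAbove_zero_apply (n : ℕ) (y : Fin (n + 2) → ℝ) :
    (MeasurableEquiv.piFinSuccAbove (fun _ : Fin (n + 2) => ℝ) 0) y
      = (y 0, fun j : Fin (n + 1) => y j.succ) := by
  show (Fin.insertNthEquiv (fun _ => ℝ) 0).symm y = _
  simp only [Fin.insertNthEquiv_symm_apply]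
  refine Prod.ext rfl ?_
  funext j
  simp [Fin.removeNth, Fin.zero_succAbove]

lemma vol_Tset_succ (a θ t : ℝ) (n : ℕ) :
    volume (Tset a θ (n + 1) t)
      = ∫⁻ x in Icc (-a) 1 ∩ Ici (θ * t), volume (Tset a θ n x) := by
  set A : Set (ℝ × (Fin (n + 1) → ℝ)) :=
    {p | (p.1 ∈ Icc (-a) 1 ∧ θ * t ≤ p.1) ∧ (∀ i, p.2 i ∈ Icc (-a) 1) ∧ θ * p.1 ≤ p.2 0 ∧
      ∀ j : Fin n, θ * p.2 j.castSucc ≤ p.2 j.succ} with hAdef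
  have hA : MeasurableSet A := by
    simp only [hAdef, Set.setOf_and, Set.setOf_forall]
    refine MeasurableSet.inter (.inter ?_ ?_) (.inter (.iInter fun i => ?_)
      (.inter ?_ (.iInter fun j => ?_)))
    · exact measurable_fst measurableSet_Icc
    · exact measurableSet_le measurable_const measurable_fst
    · exact ((measurable_pi_apply i).comp measurable_snd) measurableSet_Icc
    · exact measurableSet_le (measurable_fst.const_mul θ)
        ((measurable_pi_apply 0).comp measurable_snd)
    · exact measurableSet_le
        (measurable_const.mul ((measurable_pi_apply _).comp measurable_snd))
        ((measurable_pi_apply _).comp measurable_snd)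
  have hpre : (MeasurableEquiv.piFinSuccAbove (fun _ : Fin (n + 2) => ℝ) 0) ⁻¹' A
      = Tset a θ (n + 1) t := by
    ext y
    simp only [Set.mem_preimage, piFinSuccAbove_zero_apply, hAdef, Set.mem_setOf_eq, Tset]
    constructor
    · rintro ⟨⟨h1, h2⟩, h3, h4, h5⟩
      refine ⟨?_, h2, ?_⟩
      · intro i
        induction i using Fin.cases with
        | zero => exact h1
        | succ i => exact h3 i
      · intro j
        induction j using Fin.cases with
        | zero => simpa using h4
        | succ j =>
          have := h5 j
          rwa [Fin.succ_castSucc] at this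
    · rintro ⟨h1, h2, h3⟩
      refine ⟨⟨h1 0, h2⟩, fun i => h1 i.succ, by simpa using h3 0, fun j => ?_⟩
      have := h3 j.succ
      rwa [← Fin.succ_castSucc] at this
  have hmp := volume_preserving_piFinSuccAbove (fun _ : Fin (n + 2) => ℝ) 0
  have h1 : volume (Tset a θ (n + 1) t) = volume A := by
    rw [← hpre]
    exact hmp.measure_preimage hA.nullMeasurableSet
  rw [h1, Measure.volume_eq_prod, Measure.prod_apply hA]
  have hslice : ∀ x : ℝ, volume (Prod.mk x ⁻¹' A)
      = (Icc (-a) 1 ∩ Ici (θ * t)).indicator (fun x => volume (Tset a θ n x)) x := by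
    intro x
    by_cases hx : x ∈ Icc (-a) 1 ∩ Ici (θ * t)
    · rw [Set.indicator_of_mem hx]
      congr 1
      ext y
      simp only [Set.mem_preimage, hAdef, Set.mem_setOf_eq, Tset]
      have hx1 := hx.1
      have hx2 : θ * t ≤ x := hx.2
      tauto
    · rw [Set.indicator_of_notMem hx]
      have : Prod.mk x ⁻¹' A = ∅ := by
        ext y
        simp only [Set.mem_preimage, hAdef, Set.mem_setOf_eq, Set.mem_empty_iff_false,
          iff_false]
        rintro ⟨⟨h1', h2'⟩, -⟩
        exact hx ⟨h1', h2'⟩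
      rw [this, measure_empty]
  rw [lintegral_congr hslice, lintegral_indicator (measurableSet_Icc.inter measurableSet_Ici)]

lemma vol_Sset (a θ : ℝ) (n : ℕ) :
    volume {x : Fin (n + 2) → ℝ | (∀ i, x i ∈ Icc (-a) 1) ∧
        ∀ i : Fin (n + 1), θ * x i.castSucc ≤ x i.succ}
      = ∫⁻ x in Icc (-a) 1, volume (Tset a θ n x) := by
  set A : Set (ℝ × (Fin (n + 1) → ℝ)) :=
    {p | p.1 ∈ Icc (-a) 1 ∧ (∀ i, p.2 i ∈ Icc (-a) 1) ∧ θ * p.1 ≤ p.2 0 ∧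
      ∀ j : Fin n, θ * p.2 j.castSucc ≤ p.2 j.succ} with hAdef
  have hA : MeasurableSet A := by
    simp only [hAdef, Set.setOf_and, Set.setOf_forall]
    refine MeasurableSet.inter ?_ (.inter (.iInter fun i => ?_)
      (.inter ?_ (.iInter fun j => ?_)))
    · exact measurable_fst measurableSet_Icc
    · exact ((measurable_pi_apply i).comp measurable_snd) measurableSet_Icc
    · exact measurableSet_le (measurable_fst.const_mul θ)
        ((measurable_pi_apply 0).comp measurable_snd)
    · exact measurableSet_le
        (measurable_const.mul ((measurable_pi_apply _).comp measurable_snd))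
        ((measurable_pi_apply _).comp measurable_snd)
  have hpre : (MeasurableEquiv.piFinSuccAbove (fun _ : Fin (n + 2) => ℝ) 0) ⁻¹' A
      = {x : Fin (n + 2) → ℝ | (∀ i, x i ∈ Icc (-a) 1) ∧
        ∀ i : Fin (n + 1), θ * x i.castSucc ≤ x i.succ} := by
    ext y
    simp only [Set.mem_preimage, piFinSuccAbove_zero_apply, hAdef, Set.mem_setOf_eq]
    constructor
    · rintro ⟨h1, h3, h4, h5⟩
      refine ⟨?_, ?_⟩
      · intro i
        induction i using Fin.cases with
        | zero => exact h1
        | succ i => exact h3 i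
      · intro j
        induction j using Fin.cases with
        | zero => simpa using h4
        | succ j =>
          have := h5 j
          rwa [Fin.succ_castSucc] at this
    · rintro ⟨h1, h3⟩
      refine ⟨h1 0, fun i => h1 i.succ, by simpa using h3 0, fun j => ?_⟩
      have := h3 j.succ
      rwa [← Fin.succ_castSucc] at this
  have hmp := volume_preserving_piFinSuccAbove (fun _ : Fin (n + 2) => ℝ) 0
  have h1 : volume {x : Fin (n + 2) → ℝ | (∀ i, x i ∈ Icc (-a) 1) ∧
      ∀ i : Fin (n + 1), θ * x i.castSucc ≤ x i.succ} = volume A := by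
    rw [← hpre]
    exact hmp.measure_preimage hA.nullMeasurableSet
  rw [h1, Measure.volume_eq_prod, Measure.prod_apply hA]
  have hslice : ∀ x : ℝ, volume (Prod.mk x ⁻¹' A)
      = (Icc (-a) 1).indicator (fun x => volume (Tset a θ n x)) x := by
    intro x
    by_cases hx : x ∈ Icc (-a) 1
    · rw [Set.indicator_of_mem hx]
      congr 1
      ext y
      simp only [Set.mem_preimage, hAdef, Set.mem_setOf_eq, Tset]
      tauto
    · rw [Set.indicator_of_notMem hx]
      have : Prod.mk x ⁻¹' A = ∅ := by
        ext y
        simp only [Set.mem_preimage, hAdef, Set.mem_setOf_eq, Set.mem_empty_iff_false,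
          iff_false]
        rintro ⟨h1', -⟩
        exact hx h1'
      rw [this, measure_empty]
  rw [lintegral_congr hslice, lintegral_indicator measurableSet_Icc]

lemma vol_Tset_formula (a θ : ℝ) (ha : 0 < 1 + a)
    (hmap : ∀ x ∈ Icc (-a) 1, θ * x ∈ Icc (-a) 1) :
    ∀ n, ∀ t, θ * t ∈ Icc (-a) 1 →
      volume (Tset a θ n t) = ENNReal.ofReal ((1 + a) ^ (n + 1) * gg a θ (n + 1) t) := by
  intro n
  induction n with
  | zero =>
    intro t ht
    rw [vol_Tset_zero a θ t ht]
    congr 1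
    rw [gg_one_eq a θ ha.ne']
    field_simp
    ring
  | succ n ih =>
    intro t ht
    rw [vol_Tset_succ]
    have hIcc : Icc (-a) 1 ∩ Ici (θ * t) = Icc (θ * t) 1 := by
      ext x
      simp only [Set.mem_inter_iff, Set.mem_Icc, Set.mem_Ici]
      constructor
      · rintro ⟨⟨h1', h2'⟩, h3'⟩
        exact ⟨h3', h2'⟩
      · rintro ⟨h1', h2'⟩
        exact ⟨⟨le_trans ht.1 h1', h2'⟩, h1'⟩
    rw [hIcc]
    have hsub : Icc (θ * t) 1 ⊆ Icc (-a) 1 := Icc_subset_Icc ht.1 le_rfl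
    have hcongr : ∫⁻ x in Icc (θ * t) 1, volume (Tset a θ n x)
        = ∫⁻ x in Icc (θ * t) 1,
            ENNReal.ofReal ((1 + a) ^ (n + 1) * gg a θ (n + 1) x) := by
      refine setLIntegral_congr_fun measurableSet_Icc (fun x hx => ?_)
      exact ih x (hmap x (hsub hx))
    rw [hcongr]
    have hint : IntegrableOn (fun x => (1 + a) ^ (n + 1) * gg a θ (n + 1) x)
        (Icc (θ * t) 1) volume :=
      (continuous_const.mul (gg_cont a θ (n + 1))).integrableOn_Icc
    have hnn : 0 ≤ᵐ[volume.restrict (Icc (θ * t) 1)]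
        fun x => (1 + a) ^ (n + 1) * gg a θ (n + 1) x := by
      refine (ae_restrict_iff' measurableSet_Icc).2 (ae_of_all _ fun x hx => ?_)
      have := gg_nonneg a θ ha hmap (n + 1) x (hmap x (hsub hx))
      positivity
    rw [← MeasureTheory.ofReal_integral_eq_lintegral_ofReal hint hnn]
    congr 1
    rw [MeasureTheory.integral_Icc_eq_integral_Ioc,
      ← intervalIntegral.integral_of_le ht.2]
    rw [intervalIntegral.integral_const_mul]
    have := gg_rec a θ ha.ne' (n + 1) t
    have hrw : ∫ y in (θ * t)..1, gg a θ (n + 1) y = (1 + a) * gg a θ (n + 2) t := by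
      rw [this]
      field_simp
    rw [hrw]
    ring

lemma persprob_eq (a θ : ℝ) (ha : 0 < 1 + a)
    (hmap : ∀ x ∈ Icc (-a) 1, θ * x ∈ Icc (-a) 1) (n : ℕ) :
    persprob a θ n = pF a θ n := by
  have hma : -a ≤ 1 := by linarith
  have pf_nonneg : ∀ m, 0 ≤ pF a θ m := by
    intro m
    have hi := pF_integral a θ ha.ne' m
    have hnn : 0 ≤ ∫ x in (-a)..1, gg a θ m x := by
      apply intervalIntegral.integral_nonneg hma
      intro y hy
      exact gg_nonneg a θ ha hmap m y (hmap y hy)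
    nlinarith
  cases n with
  | zero =>
    show (1:ℝ) = pF a θ 0
    simp [pF, dd, bb_zero]
    field_simp
    ring
  | succ n =>
    show (volume {x : Fin (n + 2) → ℝ |
        (∀ i, x i ∈ Icc (-a) 1) ∧
        ∀ i : Fin (n + 1), θ * x i.castSucc ≤ x i.succ}).toReal / (1 + a) ^ (n + 2)
      = pF a θ (n + 1)
    rw [vol_Sset a θ n]
    have hcongr : ∫⁻ x in Icc (-a) 1, volume (Tset a θ n x)
        = ∫⁻ x in Icc (-a) 1,
            ENNReal.ofReal ((1 + a) ^ (n + 1) * gg a θ (n + 1) x) := by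
      refine setLIntegral_congr_fun measurableSet_Icc (fun x hx => ?_)
      exact vol_Tset_formula a θ ha hmap n x (hmap x hx)
    rw [hcongr]
    have hint : IntegrableOn (fun x => (1 + a) ^ (n + 1) * gg a θ (n + 1) x)
        (Icc (-a) 1) volume :=
      (continuous_const.mul (gg_cont a θ (n + 1))).integrableOn_Icc
    have hnn : 0 ≤ᵐ[volume.restrict (Icc (-a) 1)]
        fun x => (1 + a) ^ (n + 1) * gg a θ (n + 1) x := by
      refine (ae_restrict_iff' measurableSet_Icc).2 (ae_of_all _ fun x hx => ?_)
      have := gg_nonneg a θ ha hmap (n + 1) x (hmap x hx)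
      positivity
    rw [← MeasureTheory.ofReal_integral_eq_lintegral_ofReal hint hnn]
    rw [MeasureTheory.integral_Icc_eq_integral_Ioc, ← intervalIntegral.integral_of_le hma]
    rw [intervalIntegral.integral_const_mul, pF_integral a θ ha.ne' (n + 1)]
    rw [ENNReal.toReal_ofReal (mul_nonneg (by positivity)
      (mul_nonneg (by positivity) (pf_nonneg (n + 1))))]
    field_simp
    ring

lemma persprob_bounds (a θ : ℝ) (ha : 0 < 1 + a)
    (hmap : ∀ x ∈ Icc (-a) 1, θ * x ∈ Icc (-a) 1) (n : ℕ) :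
    0 ≤ persprob a θ n ∧ persprob a θ n ≤ 1 := by
  cases n with
  | zero => constructor <;> norm_num [persprob]
  | succ n =>
    have hset : {x : Fin (n + 2) → ℝ |
        (∀ i, x i ∈ Icc (-a) 1) ∧
        ∀ i : Fin (n + 1), θ * x i.castSucc ≤ x i.succ}
        ⊆ Set.pi univ (fun _ : Fin (n + 2) => Icc (-a) 1) := by
      intro x hx i _
      exact hx.1 i
    have hbox : volume (Set.pi univ (fun _ : Fin (n + 2) => Icc (-a) 1))
        = ENNReal.ofReal ((1 + a) ^ (n + 2)) := by
      rw [volume_pi_pi]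
      simp only [Real.volume_Icc]
      rw [Finset.prod_const, Finset.card_univ, Fintype.card_fin]
      rw [← ENNReal.ofReal_pow (by linarith)]
      congr 1
      ring
    have hle := measure_mono (μ := (volume : Measure (Fin (n + 2) → ℝ))) hset
    rw [hbox] at hle
    have hfin : volume {x : Fin (n + 2) → ℝ |
        (∀ i, x i ∈ Icc (-a) 1) ∧
        ∀ i : Fin (n + 1), θ * x i.castSucc ≤ x i.succ} ≠ ⊤ :=
      ne_top_of_le_ne_top ENNReal.ofReal_ne_top hle
    have htr : (volume {x : Fin (n + 2) → ℝ |
        (∀ i, x i ∈ Icc (-a) 1) ∧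
        ∀ i : Fin (n + 1), θ * x i.castSucc ≤ x i.succ}).toReal ≤ (1 + a) ^ (n + 2) := by
      have := ENNReal.toReal_mono ENNReal.ofReal_ne_top hle
      rwa [ENNReal.toReal_ofReal (by positivity)] at this
    have hpos : (0:ℝ) < (1 + a) ^ (n + 2) := by positivity
    constructor
    · show 0 ≤ (volume {x : Fin (n + 2) → ℝ |
        (∀ i, x i ∈ Icc (-a) 1) ∧
        ∀ i : Fin (n + 1), θ * x i.castSucc ≤ x i.succ}).toReal / (1 + a) ^ (n + 2)
      positivity
    · show (volume {x : Fin (n + 2) → ℝ |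
        (∀ i, x i ∈ Icc (-a) 1) ∧
        ∀ i : Fin (n + 1), θ * x i.castSucc ≤ x i.succ}).toReal / (1 + a) ^ (n + 2) ≤ 1
      rw [div_le_one hpos]
      exact htr

theorem blue_region_generating_function (a θ : ℝ)
    (h : (θ ∈ Icc (0 : ℝ) 1 ∧ 0 ≤ a) ∨
      (θ ∈ Ico (-1 : ℝ) 0 ∧ -θ ≤ a ∧ a ≤ -1 / θ)) :
    ∃ ε > 0, ∀ z : ℂ, ‖z‖ < ε →
      (∑' n : ℕ, (persprob a θ n : ℂ) * z ^ n) * z * defExp θ (-z / (1 + a)) =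
        defExp θ ((a : ℂ) * z / (1 + a)) - defExp θ (-z / (1 + a)) := by
  -- basic consequences of the hypotheses
  have ha : 0 < 1 + a := by
    rcases h with ⟨_, ha0⟩ | ⟨⟨h1, h2⟩, ha1, _⟩
    · linarith
    · linarith
  have hθ1 : |θ| ≤ 1 := by
    rcases h with ⟨⟨h1, h2⟩, _⟩ | ⟨⟨h1, h2⟩, _, _⟩
    · rw [abs_le]; constructor <;> linarith
    · rw [abs_le]; constructor <;> linarith
  have hmap : ∀ x ∈ Icc (-a) 1, θ * x ∈ Icc (-a) 1 := by
    rcases h with ⟨⟨h1, h2⟩, ha0⟩ | ⟨⟨h1, h2⟩, ha1, ha2⟩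
    · intro x ⟨hx1, hx2⟩
      constructor
      · nlinarith
      · nlinarith
    · intro x ⟨hx1, hx2⟩
      have hθne : θ ≠ 0 := ne_of_lt h2
      have key : a * (-θ) ≤ 1 := by
        have := mul_le_mul_of_nonneg_right ha2 (by linarith : (0:ℝ) ≤ -θ)
        have heq : -1 / θ * (-θ) = 1 := by field_simp
        linarith [heq ▸ this]
      constructor
      · nlinarith
      · nlinarith
  refine ⟨1, one_pos, fun z hz => ?_⟩
  have haC : (1 : ℂ) + (a : ℂ) ≠ 0 := by
    have h' : ((1 + a : ℝ) : ℂ) ≠ 0 := Complex.ofReal_ne_zero.2 ha.ne'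
    push_cast at h'
    exact h'
  set w1 : ℂ := -z / (1 + (a : ℂ)) with hw1
  set w2 : ℂ := (a : ℂ) * z / (1 + (a : ℂ)) with hw2
  have hsumE : ∀ w : ℂ,
      Summable (fun n : ℕ => ‖(θ : ℂ) ^ (n * (n - 1) / 2) * w ^ n / (n.factorial : ℂ)‖) := by
    intro w
    refine Summable.of_nonneg_of_le (fun n => norm_nonneg _) (fun n => ?_)
      (Real.summable_pow_div_factorial ‖w‖)
    rw [norm_div, norm_mul, norm_pow, norm_pow]
    have h1 : ‖(θ : ℂ)‖ ≤ 1 := by rwa [Complex.norm_real, Real.norm_eq_abs]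
    have h2 : ‖((n.factorial : ℕ) : ℂ)‖ = (n.factorial : ℝ) := by
      rw [Complex.norm_natCast]
    rw [h2]
    have hfpos : (0:ℝ) < (n.factorial : ℝ) := by positivity
    calc ‖(θ : ℂ)‖ ^ (n * (n - 1) / 2) * ‖w‖ ^ n / (n.factorial : ℝ)
        ≤ 1 * ‖w‖ ^ n / (n.factorial : ℝ) := by
          gcongr
          exact pow_le_one₀ (norm_nonneg _) h1
      _ = ‖w‖ ^ n / (n.factorial : ℝ) := by ring
  have hsumP : Summable (fun n : ℕ => ‖(persprob a θ n : ℂ) * z ^ n‖) := by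
    refine Summable.of_nonneg_of_le (fun n => norm_nonneg _) (fun n => ?_)
      (summable_geometric_of_lt_one (norm_nonneg z) hz)
    rw [norm_mul, norm_pow]
    have hb := persprob_bounds a θ ha hmap n
    have h1 : ‖((persprob a θ n : ℝ) : ℂ)‖ ≤ 1 := by
      rw [Complex.norm_real, Real.norm_eq_abs, abs_le]
      exact ⟨by linarith [hb.1], hb.2⟩
    calc ‖((persprob a θ n : ℝ) : ℂ)‖ * ‖z‖ ^ n ≤ 1 * ‖z‖ ^ n := by
          gcongr
      _ = ‖z‖ ^ n := one_mul _
  have hE1sum : Summable (fun n : ℕ => (θ : ℂ) ^ (n * (n - 1) / 2) * w1 ^ n /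
      (n.factorial : ℂ)) := (hsumE w1).of_norm
  have hE2sum : Summable (fun n : ℕ => (θ : ℂ) ^ (n * (n - 1) / 2) * w2 ^ n /
      (n.factorial : ℂ)) := (hsumE w2).of_norm
  have hfsub : Summable (fun n : ℕ =>
      (θ : ℂ) ^ (n * (n - 1) / 2) * w2 ^ n / (n.factorial : ℂ)
        - (θ : ℂ) ^ (n * (n - 1) / 2) * w1 ^ n / (n.factorial : ℂ)) := hE2sum.sub hE1sum
  have hprod := tsum_mul_tsum_eq_tsum_sum_antidiagonal_of_summable_norm hsumP (hsumE w1)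
  have hkey : ∀ N : ℕ,
      (∑ kl ∈ Finset.HasAntidiagonal.antidiagonal N, ((persprob a θ kl.1 : ℂ) * z ^ kl.1) *
        ((θ : ℂ) ^ (kl.2 * (kl.2 - 1) / 2) * w1 ^ kl.2 / (kl.2.factorial : ℂ))) * z
      = (θ : ℂ) ^ ((N+1) * ((N+1) - 1) / 2) * w2 ^ (N+1) / ((N+1).factorial : ℂ)
        - (θ : ℂ) ^ ((N+1) * ((N+1) - 1) / 2) * w1 ^ (N+1) / ((N+1).factorial : ℂ) := by
    intro N
    rw [Finset.Nat.sum_antidiagonal_eq_sum_range_succ_mk]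
    have hterm : ∀ k ∈ Finset.range (N + 1),
        ((persprob a θ k : ℂ) * z ^ k) *
          ((θ : ℂ) ^ ((N-k) * ((N-k) - 1) / 2) * w1 ^ (N-k) / ((N-k).factorial : ℂ))
        = ((pF a θ k * cc a θ (N-k) : ℝ) : ℂ) * z ^ N := by
      intro k hk
      rw [Finset.mem_range] at hk
      have hzk : z ^ k * z ^ (N - k) = z ^ N := by
        rw [← pow_add]
        congr 1
        omega
      rw [persprob_eq a θ ha hmap k, hw1, ← hzk]
      push_cast [cc]
      rw [div_pow, neg_pow]
      have hfne : ((N-k).factorial : ℂ) ≠ 0 := by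
        exact_mod_cast Nat.cast_ne_zero.2 (N-k).factorial_ne_zero
      have hpne : ((1:ℂ) + (a:ℂ)) ^ (N-k) ≠ 0 := pow_ne_zero _ haC
      field_simp
    rw [Finset.sum_congr rfl hterm, ← Finset.sum_mul]
    have hcast : ∑ k ∈ Finset.range (N + 1), ((pF a θ k * cc a θ (N-k) : ℝ) : ℂ)
        = ((dd a θ (N+1) : ℝ) : ℂ) := by
      rw [← Complex.ofReal_sum]
      exact congrArg _ (star a θ N)
    rw [hcast]
    rw [hw1, hw2]
    unfold dd
    push_cast
    have hfne : (((N+1).factorial : ℕ) : ℂ) ≠ 0 := by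
      exact_mod_cast Nat.cast_ne_zero.2 (N+1).factorial_ne_zero
    have hpne : ((1:ℂ) + (a:ℂ)) ^ (N+1) ≠ 0 := pow_ne_zero _ haC
    rw [div_pow, div_pow, neg_pow, mul_pow]
    field_simp
    ring
  calc (∑' n : ℕ, (persprob a θ n : ℂ) * z ^ n) * z * defExp θ w1
      = ((∑' n : ℕ, (persprob a θ n : ℂ) * z ^ n) *
          (∑' n : ℕ, (θ : ℂ) ^ (n * (n - 1) / 2) * w1 ^ n / (n.factorial : ℂ))) * z := by
        simp only [defExp]
        ring
    _ = (∑' N : ℕ, ∑ kl ∈ Finset.HasAntidiagonal.antidiagonal N, ((persprob a θ kl.1 : ℂ) * z ^ kl.1) *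
          ((θ : ℂ) ^ (kl.2 * (kl.2 - 1) / 2) * w1 ^ kl.2 / (kl.2.factorial : ℂ))) * z := by
        rw [hprod]
    _ = ∑' N : ℕ, (∑ kl ∈ Finset.HasAntidiagonal.antidiagonal N, ((persprob a θ kl.1 : ℂ) * z ^ kl.1) *
          ((θ : ℂ) ^ (kl.2 * (kl.2 - 1) / 2) * w1 ^ kl.2 / (kl.2.factorial : ℂ))) * z := by
        rw [tsum_mul_right]
    _ = ∑' N : ℕ, ((θ : ℂ) ^ ((N+1) * ((N+1) - 1) / 2) * w2 ^ (N+1) / ((N+1).factorial : ℂ)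
          - (θ : ℂ) ^ ((N+1) * ((N+1) - 1) / 2) * w1 ^ (N+1) / ((N+1).factorial : ℂ)) :=
        tsum_congr hkey
    _ = ∑' n : ℕ, ((θ : ℂ) ^ (n * (n - 1) / 2) * w2 ^ n / (n.factorial : ℂ)
          - (θ : ℂ) ^ (n * (n - 1) / 2) * w1 ^ n / (n.factorial : ℂ)) := by
        conv_rhs => rw [Summable.tsum_eq_zero_add hfsub]
        simp
    _ = defExp θ w2 - defExp θ w1 := by
        rw [Summable.tsum_sub hE2sum hE1sum]
        simp only [defExp]
end

section
/- Let a > 0 and θ > 0. Then for every n ≥ 0 one has the duality p_n^a(θ) = p_n^{1/a}(1/θ). -/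
open MeasureTheory Set
open Pointwise

private lemma aux1 (a t : ℝ) (ha : 0 < a) :
    (-a ≤ -a * t ∧ -a * t ≤ 1) ↔ (-(1/a) ≤ t ∧ t ≤ 1) := by
  have hia : (0:ℝ) < 1/a := by positivity
  constructor
  · rintro ⟨h1, h2⟩
    constructor
    · have h3 := mul_le_mul_of_nonneg_left h2 hia.le
      have e1 : (1/a) * (-a * t) = -t := by field_simp; try ring
      have e2 : (1/a) * 1 = 1/a := by ring
      linarith
    · have h3 := mul_le_mul_of_nonneg_left h1 hia.le
      have e1 : (1/a) * (-a) = -1 := by field_simp; try ring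
      have e2 : (1/a) * (-a * t) = -t := by field_simp; try ring
      linarith
  · rintro ⟨h1, h2⟩
    constructor
    · have h3 := mul_le_mul_of_nonneg_left h2 ha.le
      nlinarith [h3]
    · have h3 := mul_le_mul_of_nonneg_left h1 ha.le
      have e1 : a * (-(1/a)) = -1 := by field_simp; try ring
      nlinarith [h3]

private lemma aux2 (a θ u v : ℝ) (ha : 0 < a) (hθ : 0 < θ) :
    (θ * (-a * u) ≤ -a * v) ↔ ((1/θ) * v ≤ u) := by
  have hia : (0:ℝ) < 1/a := by positivity
  have hit : (0:ℝ) < 1/θ := by positivity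
  constructor
  · intro h
    have h2 : v ≤ θ * u := by
      have h3 := mul_le_mul_of_nonneg_left h hia.le
      have e1 : (1/a) * (θ * (-a * u)) = -(θ * u) := by field_simp
      have e2 : (1/a) * (-a * v) = -v := by field_simp; try ring
      linarith
    have h3 := mul_le_mul_of_nonneg_left h2 hit.le
    have e1 : (1/θ) * (θ * u) = u := by field_simp; try ring
    linarith
  · intro h
    have h2 : v ≤ θ * u := by
      have h3 := mul_le_mul_of_nonneg_left h hθ.le
      have e1 : θ * ((1/θ) * v) = v := by field_simp; try ring
      linarith
    have h3 := mul_le_mul_of_nonneg_left h2 ha.le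
    nlinarith [h3]

theorem duality_positive_theta (a θ : ℝ) (ha : 0 < a) (hθ : 0 < θ) :
    ∀ n : ℕ, persprob a θ n = persprob (1 / a) (1 / θ) n := by
  intro n
  cases n with
  | zero => rfl
  | succ n =>
    have ha' : a ≠ 0 := ha.ne'
    set A : Set (Fin (n+2) → ℝ) := {x | (∀ i, x i ∈ Icc (-a) 1) ∧
        ∀ i : Fin (n+1), θ * x i.castSucc ≤ x i.succ} with hA
    set B : Set (Fin (n+2) → ℝ) := {x | (∀ i, x i ∈ Icc (-(1/a)) 1) ∧
        ∀ i : Fin (n+1), (1/θ) * x i.castSucc ≤ x i.succ} with hB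
    have hAm : MeasurableSet A := by
      rw [hA, setOf_and]
      apply MeasurableSet.inter
      · rw [setOf_forall]
        exact MeasurableSet.iInter fun i => (measurable_pi_apply i) measurableSet_Icc
      · rw [setOf_forall]
        exact MeasurableSet.iInter fun i =>
          measurableSet_le (measurable_const.mul (measurable_pi_apply _)) (measurable_pi_apply _)
    set e := MeasurableEquiv.piCongrLeft (fun _ : Fin (n+2) => ℝ) Fin.revPerm with he
    have hmp : MeasurePreserving (⇑e.symm) volume volume :=
      (volume_measurePreserving_piCongrLeft (fun _ : Fin (n+2) => ℝ) Fin.revPerm).symm e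
    have hc : (-(1/a)) ≠ 0 := by simp [ha']
    have hBeq : B = (-(1/a)) • (⇑e.symm ⁻¹' A) := by
      ext y
      rw [mem_smul_set_iff_inv_smul_mem₀ hc]
      have hinv : (-(1/a))⁻¹ = -a := by field_simp; try ring
      have hcoe : ⇑e.symm ((-(1/a))⁻¹ • y) = fun j => (-a) * y (Fin.rev j) := by
        rw [hinv]; rfl
      rw [mem_preimage, hcoe]
      simp only [hB, hA, mem_setOf_eq, mem_Icc]
      constructor
      · rintro ⟨h1, h2⟩
        refine ⟨fun i => (aux1 a _ ha).mpr (h1 i.rev), fun i => ?_⟩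
        rw [Fin.rev_castSucc, Fin.rev_succ]
        exact (aux2 a θ _ _ ha hθ).mpr (h2 i.rev)
      · rintro ⟨h1, h2⟩
        refine ⟨fun i => ?_, fun i => ?_⟩
        · have h3 := (aux1 a _ ha).mp (h1 i.rev)
          rwa [Fin.rev_rev] at h3
        · have h3 := h2 i.rev
          rw [Fin.rev_castSucc, Fin.rev_succ, Fin.rev_rev] at h3
          exact (aux2 a θ _ _ ha hθ).mp h3
    have key : volume B = ENNReal.ofReal ((1/a)^(n+2)) * volume A := by
      rw [hBeq, Measure.addHaar_smul, Module.finrank_fin_fun,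
        hmp.measure_preimage hAm.nullMeasurableSet]
      congr 1
      rw [abs_pow, abs_neg, abs_of_pos (by positivity : (0:ℝ) < 1/a)]
    show (volume A).toReal / (1 + a) ^ (n + 2) = (volume B).toReal / (1 + 1/a) ^ (n + 2)
    rw [key, ENNReal.toReal_mul, ENNReal.toReal_ofReal (by positivity)]
    rw [div_eq_div_iff (by positivity) (by positivity)]
    have hpow : (1/a)^(n+2) * (1+a)^(n+2) = (1+1/a)^(n+2) := by
      rw [← mul_pow]
      congr 1
      field_simp; try ring
    rw [← hpow]; ring
end

section
/- Let a > 0 and θ < 0. Then for every n ≥ 0 one has the duality p_n^a(θ) = p_n^a(1/θ). -/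
/-! Reversing the order of the coordinates preserves Lebesgue measure and the box `[-a,1]^{n+1}`,
and for `θ < 0` it turns each constraint `θ x_i ≤ x_{i+1}` into `θ⁻¹ x_{i+1} ≤ x_i`
(division by `θ` flips the inequality). -/

open MeasureTheory Set

lemma volume_preimage_comp_equiv {ι α : Type*} [Fintype ι] [MeasureSpace α]
    [SigmaFinite (volume : Measure α)] (σ : ι ≃ ι) (s : Set (ι → α)) :
    volume ((· ∘ σ) ⁻¹' s) = volume s := by
  convert (volume_measurePreserving_piCongrLeft (fun _ : ι ↦ α) σ.symm).measure_preimage_equiv s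
  ext x
  simp [MeasurableEquiv.coe_piCongrLeft, Equiv.piCongrLeft_apply]

lemma mul_le_iff_inv_mul_le_of_neg {K : Type*} [Field K] [LinearOrder K] [IsStrictOrderedRing K]
    {θ u v : K} (hθ : θ < 0) : θ * u ≤ v ↔ θ⁻¹ * v ≤ u := by
  rw [← div_eq_inv_mul, div_le_iff_of_neg hθ, mul_comm]

def persistenceSet (a θ : ℝ) (n : ℕ) : Set (Fin (n + 2) → ℝ) :=
  {x | (∀ i, x i ∈ Icc (-a) 1) ∧ ∀ i : Fin (n + 1), θ * x i.castSucc ≤ x i.succ}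

lemma persprob_succ (a θ : ℝ) (n : ℕ) :
    persprob a θ (n + 1) = (volume (persistenceSet a θ n)).toReal / (1 + a) ^ (n + 2) :=
  rfl

lemma preimage_comp_rev_persistenceSet {a θ : ℝ} (hθ : θ < 0) (n : ℕ) :
    (· ∘ Fin.rev) ⁻¹' persistenceSet a θ⁻¹ n = persistenceSet a θ n := by
  ext x
  simp only [persistenceSet, mem_preimage, mem_ofPred_eq, Function.comp_apply,
    Fin.rev_castSucc, Fin.rev_succ]
  refine and_congr (Fin.revPerm.forall_congr_right (q := fun i ↦ x i ∈ Icc (-a) 1)) ?_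
  rw [← Fin.revPerm.forall_congr_right]
  simp [mul_le_iff_inv_mul_le_of_neg hθ]

theorem duality_negative_theta_general (a θ : ℝ) (hθ : θ < 0) :
    ∀ n : ℕ, persprob a θ n = persprob a (1 / θ) n := by
  rintro (_ | n)
  · rfl
  · rw [persprob_succ, persprob_succ, one_div, ← preimage_comp_rev_persistenceSet hθ n]
    congr 2
    exact volume_preimage_comp_equiv Fin.revPerm _

theorem duality_negative_theta (a θ : ℝ) (ha : 0 < a) (hθ : θ < 0) :
    ∀ n : ℕ, persprob a θ n = persprob a (1 / θ) n :=
  duality_negative_theta_general a θ hθ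
end

section
/- Let θ ∈ [0,1] and a = 0. Then for every ℓ ≥ 1 one has p_{ℓ-1}^0(θ) = (-1)^ℓ · φ_ℓ(θ) = (-1)^ℓ · ∑_{ℓ-profiles r} ((∑_{i=1}^ℓ r_i)! / (r_1!⋯r_ℓ!)) · ∏_{i=1}^ℓ (−θ^{i(i−1)/2}/i!)^{r_i}. -/
open MeasureTheory Set

/-- `φ_ℓ(θ)`: the sum over all `ℓ`-profiles `r = (r_1,…,r_ℓ)` (nonnegative
integers with `∑ i·r_i = ℓ`, so that necessarily `r_i ≤ ℓ`) of
`((∑ r_i)! / (r_1!⋯r_ℓ!)) · ∏_i (−θ^{i(i−1)/2}/i!)^{r_i}`, with `φ_0(θ) := 1`.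
Here `i : Fin ℓ` encodes the index `i+1 ∈ {1,…,ℓ}`. -/
noncomputable def phiR (θ : ℝ) : ℕ → ℝ
  | 0 => 1
  | ℓ + 1 =>
    ∑ r ∈ Finset.univ.filter
        (fun r : Fin (ℓ + 1) → Fin (ℓ + 2) =>
          ∑ i : Fin (ℓ + 1), (i.1 + 1) * (r i).1 = ℓ + 1),
      (((∑ i : Fin (ℓ + 1), (r i).1).factorial : ℝ) /
          ∏ i : Fin (ℓ + 1), ((r i).1.factorial : ℝ)) *
        ∏ i : Fin (ℓ + 1),
          (-(θ ^ ((i.1 + 1) * i.1 / 2)) / (((i.1 + 1).factorial : ℕ) : ℝ)) ^ (r i).1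

noncomputable def cw (x : ℕ → ℝ) : ℕ → ℝ
  | 0 => 1
  | (L+1) => ∑ j ∈ Finset.range (L+1), x (j+1) * cw x (L - j)
  decreasing_by omega

noncomputable def multR {N : ℕ} (r : Fin N → ℕ) : ℝ :=
  ((∑ i, r i).factorial : ℝ) / ∏ i, ((r i).factorial : ℝ)

def pdom (N B L : ℕ) : Finset (Fin N → ℕ) :=
  (Fintype.piFinset fun _ : Fin N => Finset.range B).filter
    (fun r => ∑ i, (i.1 + 1) * r i = L)

noncomputable def Sw (x : ℕ → ℝ) (N B L : ℕ) : ℝ :=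
  ∑ r ∈ pdom N B L, multR r * ∏ i, x (i.1 + 1) ^ r i

lemma prod_fact_pos {N : ℕ} (r : Fin N → ℕ) : (0:ℝ) < ∏ i, ((r i).factorial : ℝ) :=
  Finset.prod_pos fun i _ => by exact_mod_cast (r i).factorial_pos

lemma multR_dec {N : ℕ} (r : Fin N → ℕ) (h : 0 < ∑ i, r i) :
    multR r = ∑ j ∈ Finset.univ.filter (fun j => 0 < r j),
      multR (Function.update r j (r j - 1)) := by
  classical
  set m := ∑ i, r i with hm
  have hfact : ((m.factorial : ℕ) : ℝ) = (m : ℝ) * ((m-1).factorial : ℕ) := by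
    obtain ⟨k, hk⟩ := Nat.exists_eq_succ_of_ne_zero h.ne'
    rw [hk]; push_cast [Nat.factorial_succ, Nat.succ_sub_one]; ring
  have hmsum : (m : ℝ) = ∑ j : Fin N, (r j : ℝ) := by exact_mod_cast hm
  rw [Finset.sum_filter]
  rw [show multR r = ∑ j : Fin N, (r j : ℝ) * (((m-1).factorial : ℕ) / ∏ i, ((r i).factorial : ℝ)) by
    rw [multR, ← hm, hfact, hmsum, Finset.sum_mul, Finset.sum_div]
    exact Finset.sum_congr rfl fun j _ => by ring]
  refine Finset.sum_congr rfl fun j _ => ?_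
  by_cases hj : 0 < r j
  · rw [if_pos hj, multR]
    have hsum : ∑ i, Function.update r j (r j - 1) i = m - 1 := by
      rw [Finset.sum_update_of_mem (Finset.mem_univ j)]
      have := Finset.sum_erase_add Finset.univ r (Finset.mem_univ j)
      rw [Finset.erase_eq] at this
      omega
    have hprod : ∏ i, (((Function.update r j (r j - 1) i).factorial : ℕ) : ℝ)
        = (((r j - 1).factorial : ℕ) : ℝ) * ∏ i ∈ Finset.univ \ {j}, (((r i).factorial : ℕ) : ℝ) := by
      have : ∀ i, (((Function.update r j (r j - 1) i).factorial : ℕ) : ℝ)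
          = Function.update (fun k => (((r k).factorial : ℕ) : ℝ)) j (((r j - 1).factorial : ℕ) : ℝ) i :=
        fun i => Function.apply_update (fun _ n => ((n.factorial : ℕ) : ℝ)) r j (r j - 1) i
      rw [Finset.prod_congr rfl (fun i _ => this i),
        Finset.prod_update_of_mem (Finset.mem_univ j)]
    rw [hsum, hprod]
    have hprodfull : ∏ i, ((r i).factorial : ℝ)
        = ((r j).factorial : ℝ) * ∏ i ∈ Finset.univ \ {j}, (((r i).factorial : ℕ) : ℝ) := by
      rw [← Finset.prod_erase_mul Finset.univ _ (Finset.mem_univ j), Finset.erase_eq]; ring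
    have hrj : ((r j).factorial : ℝ) = (r j : ℝ) * ((r j - 1).factorial : ℕ) := by
      obtain ⟨k, hk⟩ := Nat.exists_eq_succ_of_ne_zero hj.ne'
      rw [hk]; push_cast [Nat.factorial_succ]; ring
    rw [hprodfull, hrj]
    have h1 : (((r j - 1).factorial : ℕ) : ℝ) ≠ 0 := by positivity
    have h2 : ((0:ℝ) < ∏ i ∈ Finset.univ \ {j}, (((r i).factorial : ℕ) : ℝ)) := by
      refine Finset.prod_pos fun i _ => ?_
      exact_mod_cast (r i).factorial_pos
    have h3 : (r j : ℝ) ≠ 0 := by exact_mod_cast hj.ne'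
    field_simp
  · rw [if_neg hj]
    have : r j = 0 := by omega
    rw [this]; simp

lemma Sw_eq (x : ℕ → ℝ) (L : ℕ) : ∀ N B, L ≤ N → L < B → Sw x N B L = cw x L := by
  induction L using Nat.strong_induction_on with
  | _ L IH =>
    intro N B hN hB
    match L with
    | 0 =>
      have hdom : pdom N B 0 = {fun _ => 0} := by
        ext r
        simp only [pdom, Finset.mem_filter, Fintype.mem_piFinset, Finset.mem_range,
          Finset.mem_singleton]
        constructor
        · rintro ⟨-, h⟩
          funext i
          have h1 := Finset.sum_eq_zero_iff.mp h i (Finset.mem_univ i)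
          simpa using h1
        · rintro rfl
          exact ⟨fun i => by simpa using hB, by simp⟩
      rw [Sw, hdom, Finset.sum_singleton, cw, multR]
      simp
    | (L+1) =>
      classical
      have key : ∀ r ∈ pdom N B (L+1), 0 < ∑ i, r i := by
        intro r hr
        rcases Nat.eq_zero_or_pos (∑ i, r i) with h0 | h0
        · exfalso
          have hz : ∀ i, r i = 0 := fun i => by
            have := Finset.sum_eq_zero_iff.mp h0 i (Finset.mem_univ i); omega
          have : (∑ i, (i.1 + 1) * r i) = 0 := Finset.sum_eq_zero fun i _ => by rw [hz]; ring
          have hc := (Finset.mem_filter.mp hr).2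
          omega
        · exact h0
      have step1 : Sw x N B (L+1) = ∑ j : Fin N, ∑ r ∈ pdom N B (L+1),
          (if 0 < r j then multR (Function.update r j (r j - 1)) * ∏ i, x (i.1 + 1) ^ r i
            else 0) := by
        rw [Sw]
        have hterm : ∀ r ∈ pdom N B (L+1), multR r * ∏ i, x (i.1 + 1) ^ r i
            = ∑ j : Fin N, (if 0 < r j then
                multR (Function.update r j (r j - 1)) * ∏ i, x (i.1 + 1) ^ r i else 0) := by
          intro r hr
          rw [multR_dec r (key r hr), Finset.sum_filter, Finset.sum_mul]
          exact Finset.sum_congr rfl fun j _ => by rw [ite_mul, zero_mul]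
        rw [Finset.sum_congr rfl hterm, Finset.sum_comm]
      have step2 : ∀ j : Fin N, (∑ r ∈ pdom N B (L+1),
          (if 0 < r j then multR (Function.update r j (r j - 1)) * ∏ i, x (i.1 + 1) ^ r i
            else 0))
          = if j.1 ≤ L then x (j.1 + 1) * cw x (L - j.1) else 0 := by
        intro j
        rw [← Finset.sum_filter]
        by_cases hj : j.1 ≤ L
        · rw [if_pos hj, ← IH (L - j.1) (by omega) N B (by omega) (by omega), Sw,
            Finset.mul_sum]
          refine Finset.sum_bij' (fun r _ => Function.update r j (r j - 1))
            (fun r' _ => Function.update r' j (r' j + 1)) ?_ ?_ ?_ ?_ ?_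
          · intro r hr
            obtain ⟨hr1, hrj⟩ := Finset.mem_filter.mp hr
            obtain ⟨hpi, hsum⟩ := Finset.mem_filter.mp hr1
            rw [Fintype.mem_piFinset] at hpi
            refine Finset.mem_filter.mpr ⟨Fintype.mem_piFinset.mpr fun i => ?_, ?_⟩
            · rcases eq_or_ne i j with rfl | hne
              · rw [Function.update_self, Finset.mem_range]
                have := Finset.mem_range.mp (hpi i); omega
              · rw [Function.update_of_ne hne]; exact hpi i
            · have happ : ∀ i : Fin N, (i.1 + 1) * Function.update r j (r j - 1) i
                  = Function.update (fun k : Fin N => (k.1 + 1) * r k) j ((j.1 + 1) * (r j - 1)) i :=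
                fun i => Function.apply_update (fun k b => (k.1 + 1) * b) r j (r j - 1) i
              rw [Finset.sum_congr rfl fun i _ => happ i,
                Finset.sum_update_of_mem (Finset.mem_univ j)]
              have horig : (j.1 + 1) * r j + ∑ i ∈ Finset.univ \ {j}, (i.1 + 1) * r i = L + 1 := by
                have h0 := Finset.sum_erase_add Finset.univ (fun k : Fin N => (k.1 + 1) * r k)
                  (Finset.mem_univ j)
                rw [Finset.erase_eq] at h0
                omega
              have h1 : (j.1 + 1) * (r j - 1) = (j.1 + 1) * r j - (j.1 + 1) := by
                rw [Nat.mul_sub, Nat.mul_one]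
              have h2 : (j.1 + 1) ≤ (j.1 + 1) * r j := Nat.le_mul_of_pos_right _ hrj
              omega
          · intro r' hr'
            obtain ⟨hpi, hsum⟩ := Finset.mem_filter.mp hr'
            rw [Fintype.mem_piFinset] at hpi
            have hbd : r' j ≤ L := by
              have hle : (j.1 + 1) * r' j ≤ ∑ i, (i.1 + 1) * r' i :=
                Finset.single_le_sum (f := fun i : Fin N => (i.1 + 1) * r' i)
                  (fun i _ => Nat.zero_le _) (Finset.mem_univ j)
              have h2 : r' j ≤ (j.1 + 1) * r' j := Nat.le_mul_of_pos_left _ (by omega)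
              omega
            refine Finset.mem_filter.mpr ⟨Finset.mem_filter.mpr
              ⟨Fintype.mem_piFinset.mpr fun i => ?_, ?_⟩, ?_⟩
            · rcases eq_or_ne i j with rfl | hne
              · rw [Function.update_self, Finset.mem_range]; omega
              · rw [Function.update_of_ne hne]; exact hpi i
            · have happ : ∀ i : Fin N, (i.1 + 1) * Function.update r' j (r' j + 1) i
                  = Function.update (fun k : Fin N => (k.1 + 1) * r' k) j ((j.1 + 1) * (r' j + 1)) i :=
                fun i => Function.apply_update (fun k b => (k.1 + 1) * b) r' j (r' j + 1) i
              rw [Finset.sum_congr rfl fun i _ => happ i,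
                Finset.sum_update_of_mem (Finset.mem_univ j)]
              have horig : (j.1 + 1) * r' j + ∑ i ∈ Finset.univ \ {j}, (i.1 + 1) * r' i
                  = L - j.1 := by
                have h0 := Finset.sum_erase_add Finset.univ (fun k : Fin N => (k.1 + 1) * r' k)
                  (Finset.mem_univ j)
                rw [Finset.erase_eq] at h0
                omega
              have h1 : (j.1 + 1) * (r' j + 1) = (j.1 + 1) * r' j + (j.1 + 1) := by ring
              omega
            · simp only [Function.update_self]; omega
          · intro r hr
            obtain ⟨-, hrj⟩ := Finset.mem_filter.mp hr
            simp only [Function.update_idem, Function.update_self]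
            rw [Nat.sub_add_cancel hrj, Function.update_eq_self]
          · intro r' hr'
            simp only [Function.update_idem, Function.update_self]
            rw [Nat.add_sub_cancel, Function.update_eq_self]
          · intro r hr
            obtain ⟨-, hrj⟩ := Finset.mem_filter.mp hr
            have hP : (∏ i, x (i.1 + 1) ^ r i)
                = x (j.1 + 1) * ∏ i, x (i.1 + 1) ^ (Function.update r j (r j - 1) i) := by
              have happ : ∀ i : Fin N, x (i.1 + 1) ^ (Function.update r j (r j - 1) i)
                  = Function.update (fun k : Fin N => x (k.1 + 1) ^ r k) j
                      (x (j.1 + 1) ^ (r j - 1)) i :=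
                fun i => Function.apply_update (fun k b => x (k.1 + 1) ^ b) r j (r j - 1) i
              rw [Finset.prod_congr rfl fun i _ => happ i,
                Finset.prod_update_of_mem (Finset.mem_univ j)]
              rw [← Finset.prod_erase_mul Finset.univ _ (Finset.mem_univ j), Finset.erase_eq]
              have : x (j.1 + 1) ^ r j = x (j.1 + 1) ^ (r j - 1) * x (j.1 + 1) := by
                conv_lhs => rw [← Nat.sub_add_cancel hrj]
                rw [pow_succ]
              rw [this]; ring
            rw [hP]; ring
        · rw [if_neg hj]
          have : (pdom N B (L+1)).filter (fun r => 0 < r j) = ∅ := by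
            refine Finset.eq_empty_of_forall_notMem fun r hr => ?_
            obtain ⟨hr1, hrj⟩ := Finset.mem_filter.mp hr
            obtain ⟨-, hsum⟩ := Finset.mem_filter.mp hr1
            have hle : (j.1 + 1) * r j ≤ ∑ i, (i.1 + 1) * r i :=
              Finset.single_le_sum (f := fun i : Fin N => (i.1 + 1) * r i)
                (fun i _ => Nat.zero_le _) (Finset.mem_univ j)
            have h2 : (j.1 + 1) ≤ (j.1 + 1) * r j := Nat.le_mul_of_pos_right _ hrj
            omega
          rw [this, Finset.sum_empty]
      rw [step1, Finset.sum_congr rfl fun j _ => step2 j]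
      rw [Fin.sum_univ_eq_sum_range (fun n => if n ≤ L then x (n + 1) * cw x (L - n) else 0) N]
      rw [← Finset.sum_filter]
      have hfr : (Finset.range N).filter (fun n => n ≤ L) = Finset.range (L+1) := by
        ext n; simp only [Finset.mem_filter, Finset.mem_range]; omega
      rw [hfr, cw]

lemma cw_sign (x : ℕ → ℝ) : ∀ L, cw (fun j => (-1:ℝ)^j * x j) L = (-1:ℝ)^L * cw x L := by
  intro L
  induction L using Nat.strong_induction_on with
  | _ L IH =>
    match L with
    | 0 => simp [cw]
    | (L+1) =>
      rw [cw, cw, Finset.mul_sum]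
      refine Finset.sum_congr rfl fun j hj => ?_
      have hjL : j ≤ L := by simpa [Nat.lt_succ_iff] using hj
      rw [IH (L - j) (by omega)]
      have hpow : (-1:ℝ)^(j+1) * (-1:ℝ)^(L-j) = (-1:ℝ)^(L+1) := by
        rw [← pow_add]
        congr 1
        omega
      calc (-1:ℝ)^(j+1) * x (j+1) * ((-1:ℝ)^(L-j) * cw x (L-j))
          = ((-1:ℝ)^(j+1) * (-1:ℝ)^(L-j)) * (x (j+1) * cw x (L-j)) := by ring
        _ = (-1:ℝ)^(L+1) * (x (j+1) * cw x (L-j)) := by rw [hpow]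

noncomputable def gcoef (θ : ℝ) (j : ℕ) : ℝ :=
  (-1:ℝ)^(j+1) * θ^(j*(j-1)/2) / (j.factorial : ℝ)

noncomputable def Gpoly (θ : ℝ) (n : ℕ) (t : ℝ) : ℝ :=
  ∑ k ∈ Finset.range (n+1),
    (-1:ℝ)^k * θ^(k*(k+1)/2) * t^k / (k.factorial : ℝ) * cw (gcoef θ) (n - k)

lemma tri (k : ℕ) : (k+1)*(k+2)/2 = k*(k+1)/2 + (k+1) := by
  have h : (k+1)*(k+2) = k*(k+1) + 2*(k+1) := by ring
  omega

lemma Gpoly_zero_n (θ t : ℝ) : Gpoly θ 0 t = 1 := by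
  simp [Gpoly, cw]

lemma Gpoly_at_zero (θ : ℝ) (n : ℕ) : Gpoly θ n 0 = cw (gcoef θ) n := by
  rw [Gpoly, Finset.sum_eq_single 0]
  · simp
  · intro k _ hk
    rcases Nat.exists_eq_succ_of_ne_zero hk with ⟨m, rfl⟩
    simp [zero_pow]
  · intro h; simp at h

lemma Gpoly_cont (θ : ℝ) (n : ℕ) : Continuous (fun t => Gpoly θ n t) := by
  unfold Gpoly
  exact continuous_finset_sum _ fun k _ => by fun_prop

lemma Gpoly_integral (θ t : ℝ) (n : ℕ) :
    ∫ y in (θ*t)..1, Gpoly θ n y = Gpoly θ (n+1) t := by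
  have hint : ∀ k ∈ Finset.range (n+1), IntervalIntegrable
      (fun y => (-1:ℝ)^k * θ^(k*(k+1)/2) * y^k / (k.factorial : ℝ) * cw (gcoef θ) (n - k))
      MeasureTheory.volume (θ*t) 1 := fun k _ => (by fun_prop : Continuous _).intervalIntegrable _ _
  rw [show (fun y => Gpoly θ n y) = fun y => ∑ k ∈ Finset.range (n+1),
      (-1:ℝ)^k * θ^(k*(k+1)/2) * y^k / (k.factorial : ℝ) * cw (gcoef θ) (n - k) from rfl]
  rw [intervalIntegral.integral_finset_sum hint]
  have hterm : ∀ k ∈ Finset.range (n+1),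
      (∫ y in (θ*t)..1, (-1:ℝ)^k * θ^(k*(k+1)/2) * y^k / (k.factorial : ℝ) * cw (gcoef θ) (n - k))
      = ((-1:ℝ)^k * θ^(k*(k+1)/2) / (k.factorial : ℝ) * cw (gcoef θ) (n - k))
          * ((1 - (θ*t)^(k+1)) / (k+1)) := by
    intro k _
    have h1 : (fun y : ℝ => (-1:ℝ)^k * θ^(k*(k+1)/2) * y^k / (k.factorial : ℝ) * cw (gcoef θ) (n - k))
        = fun y : ℝ => ((-1:ℝ)^k * θ^(k*(k+1)/2) / (k.factorial : ℝ) * cw (gcoef θ) (n - k)) * y^k :=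
      funext fun y => by ring
    rw [h1, intervalIntegral.integral_const_mul, integral_pow]
    norm_num
  rw [Finset.sum_congr rfl hterm]
  -- now expand RHS
  rw [Gpoly, Finset.sum_range_succ' _ (n+1)]
  have h0 : (-1:ℝ)^0 * θ^(0*(0+1)/2) * t^0 / ((Nat.factorial 0 : ℕ) : ℝ) * cw (gcoef θ) (n+1-0)
      = cw (gcoef θ) (n+1) := by norm_num
  rw [h0]
  rw [show cw (gcoef θ) (n+1) = ∑ j ∈ Finset.range (n+1), gcoef θ (j+1) * cw (gcoef θ) (n - j) from by rw [cw]]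
  rw [← Finset.sum_add_distrib]
  refine Finset.sum_congr rfl fun k hk => ?_
  have hsub : n + 1 - (k+1) = n - k := by omega
  rw [hsub]
  have hfac : ((Nat.factorial (k+1) : ℕ) : ℝ) = (k+1) * (Nat.factorial k : ℕ) := by
    push_cast [Nat.factorial_succ]; ring
  have hexp : θ^((k+1)*(k+1+1)/2) = θ^(k*(k+1)/2) * θ^(k+1) := by
    rw [← pow_add]; congr 1; exact tri k
  have hexp2 : (k+1)*((k+1)-1)/2 = k*(k+1)/2 := by
    have h : (k+1)-1 = k := rfl
    rw [h, Nat.mul_comm]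
  rw [gcoef, hexp2, hexp, hfac]
  have hf : ((Nat.factorial k : ℕ) : ℝ) ≠ 0 := by positivity
  have hk1 : ((k:ℝ)+1) ≠ 0 := by positivity
  field_simp
  ring


lemma Gpoly_nonneg (θ : ℝ) (h0 : 0 ≤ θ) (h1 : θ ≤ 1) : ∀ n, ∀ t ∈ Set.Icc (0:ℝ) 1, 0 ≤ Gpoly θ n t := by
  intro n
  induction n with
  | zero => intro t ht; rw [Gpoly_zero_n]; norm_num
  | succ n IH =>
    intro t ht
    rw [← Gpoly_integral]
    have hθt0 : 0 ≤ θ * t := mul_nonneg h0 ht.1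
    have hθt1 : θ * t ≤ 1 := by nlinarith [ht.1, ht.2]
    exact intervalIntegral.integral_nonneg hθt1
      (fun u hu => IH u ⟨le_trans hθt0 hu.1, hu.2⟩)

def Vset (θ t : ℝ) (n : ℕ) : Set (Fin (n+1) → ℝ) :=
  {x | (∀ i, x i ∈ Set.Icc (0:ℝ) 1) ∧ θ * t ≤ x 0 ∧
    ∀ i : Fin n, θ * x i.castSucc ≤ x i.succ}

lemma Vset_closed (θ t : ℝ) (n : ℕ) : IsClosed (Vset θ t n) := by
  have h1 : Vset θ t n = (⋂ i, {x : Fin (n+1) → ℝ | x i ∈ Set.Icc (0:ℝ) 1}) ∩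
      ({x : Fin (n+1) → ℝ | θ * t ≤ x 0} ∩
        ⋂ i : Fin n, {x : Fin (n+1) → ℝ | θ * x i.castSucc ≤ x i.succ}) := by
    ext x; simp [Vset, Set.mem_iInter]
  rw [h1]
  refine IsClosed.inter (isClosed_iInter fun i => ?_)
    (IsClosed.inter ?_ (isClosed_iInter fun i => ?_))
  · exact IsClosed.preimage (continuous_apply i) isClosed_Icc
  · exact isClosed_le continuous_const (continuous_apply 0)
  · exact isClosed_le (continuous_const.mul (continuous_apply _)) (continuous_apply _)

lemma Vset_volume (θ : ℝ) (h0 : 0 ≤ θ) (h1 : θ ≤ 1) :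
    ∀ n, ∀ t ∈ Set.Icc (0:ℝ) 1,
      volume (Vset θ t n) = ENNReal.ofReal (Gpoly θ (n+1) t) := by
  intro n
  induction n with
  | zero =>
    intro t ht
    have hθt0 : 0 ≤ θ * t := mul_nonneg h0 ht.1
    have hset : Vset θ t 0 = (MeasurableEquiv.funUnique (Fin 1) ℝ) ⁻¹' (Set.Icc (θ*t) 1) := by
      ext x
      simp only [Vset, Set.mem_setOf_eq, Set.mem_preimage, MeasurableEquiv.funUnique_apply,
        Set.mem_Icc]
      constructor
      · rintro ⟨hx, hx0, -⟩
        exact ⟨hx0, (hx 0).2⟩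
      · rintro ⟨ha, hb⟩
        refine ⟨fun i => ?_, ha, fun i => i.elim0⟩
        have hi : i = 0 := by omega
        rw [hi]
        exact ⟨le_trans hθt0 ha, hb⟩
    rw [hset]; erw [(volume_preserving_funUnique (Fin 1) ℝ).measure_preimage
      measurableSet_Icc.nullMeasurableSet, Real.volume_Icc]
    congr 1
    have : Gpoly θ 1 t = 1 - θ * t := by
      simp [Gpoly, Finset.sum_range_succ, cw, gcoef]
      ring
    rw [this]
  | succ n IH =>
    intro t ht
    have hθt0 : 0 ≤ θ * t := mul_nonneg h0 ht.1
    have hθt1 : θ * t ≤ 1 := by nlinarith [ht.1, ht.2]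
    set T : Set (ℝ × (Fin (n+1) → ℝ)) :=
      {p | (p.1 ∈ Set.Icc (0:ℝ) 1 ∧ θ * t ≤ p.1) ∧ p.2 ∈ Vset θ p.1 n} with hT
    have hTclosed : IsClosed T := by
      have : T = ({p : ℝ × (Fin (n+1) → ℝ) | p.1 ∈ Set.Icc (0:ℝ) 1} ∩
          {p | θ * t ≤ p.1}) ∩
          (({p : ℝ × (Fin (n+1) → ℝ) | ∀ i, p.2 i ∈ Set.Icc (0:ℝ) 1}) ∩
            ({p | θ * p.1 ≤ p.2 0} ∩
              ⋂ i : Fin n, {p : ℝ × (Fin (n+1) → ℝ) | θ * p.2 i.castSucc ≤ p.2 i.succ})) := by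
        ext p; simp [hT, Vset, Set.mem_iInter]; try tauto
      rw [this]
      refine IsClosed.inter (IsClosed.inter ?_ ?_) (IsClosed.inter ?_ (IsClosed.inter ?_ ?_))
      · exact IsClosed.preimage continuous_fst isClosed_Icc
      · exact isClosed_le continuous_const continuous_fst
      · have : {p : ℝ × (Fin (n+1) → ℝ) | ∀ i, p.2 i ∈ Set.Icc (0:ℝ) 1}
            = ⋂ i, {p : ℝ × (Fin (n+1) → ℝ) | p.2 i ∈ Set.Icc (0:ℝ) 1} := by
          ext p; simp [Set.mem_iInter]
        rw [this]
        exact isClosed_iInter fun i =>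
          IsClosed.preimage ((continuous_apply i).comp continuous_snd) isClosed_Icc
      · exact isClosed_le (continuous_const.mul continuous_fst)
          ((continuous_apply 0).comp continuous_snd)
      · exact isClosed_iInter fun i => isClosed_le
          (continuous_const.mul ((continuous_apply i.castSucc).comp continuous_snd))
          ((continuous_apply i.succ).comp continuous_snd)
    have hpre : Vset θ t (n+1)
        = (MeasurableEquiv.piFinSuccAbove (fun _ : Fin (n+2) => ℝ) 0) ⁻¹' T := by
      ext x
      simp only [Vset, Set.mem_setOf_eq, Set.mem_preimage,
        MeasurableEquiv.piFinSuccAbove_apply, hT, Fin.insertNth]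
      constructor
      · rintro ⟨hx, hx0, hchain⟩
        refine ⟨⟨hx 0, hx0⟩, fun j => hx _, ?_, ?_⟩
        · have := hchain 0
          simpa [Fin.tail] using this
        · intro i
          have := hchain i.succ
          simpa [Fin.tail] using this
      · rintro ⟨⟨hx0m, hx0⟩, hxt, hc0, hchain⟩
        refine ⟨?_, hx0, ?_⟩
        · intro i
          rcases Fin.eq_zero_or_eq_succ i with rfl | ⟨j, rfl⟩
          · exact hx0m
          · exact hxt j
        · intro i
          rcases Fin.eq_zero_or_eq_succ i with rfl | ⟨j, rfl⟩
          · simpa [Fin.tail] using hc0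
          · have := hchain j
            simpa [Fin.tail] using this
    rw [hpre]
    have hmp := MeasureTheory.measurePreserving_piFinSuccAbove
      (fun _ : Fin (n+2) => (volume : Measure ℝ)) 0
    rw [show (volume : Measure (Fin (n+2) → ℝ)) = Measure.pi fun _ => volume from volume_pi]
    rw [hmp.measure_preimage hTclosed.measurableSet.nullMeasurableSet]
    rw [Measure.prod_apply hTclosed.measurableSet]
    have hslice : ∀ y : ℝ, (Measure.pi fun _ : Fin (n+1) => (volume : Measure ℝ))
        (Prod.mk y ⁻¹' T)
        = Set.indicator (Set.Icc (θ*t) 1) (fun y => ENNReal.ofReal (Gpoly θ (n+1) y)) y := by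
      intro y
      by_cases hy : y ∈ Set.Icc (θ*t) 1
      · have hy01 : y ∈ Set.Icc (0:ℝ) 1 := ⟨le_trans hθt0 hy.1, hy.2⟩
        have hpr : Prod.mk y ⁻¹' T = Vset θ y n := by
          ext z
          simp only [hT, Set.mem_preimage, Set.mem_setOf_eq]
          exact ⟨fun h => h.2, fun h => ⟨⟨hy01, hy.1⟩, h⟩⟩
        rw [hpr, Set.indicator_of_mem hy, ← volume_pi, IH y hy01]
      · have hpr : Prod.mk y ⁻¹' T = ∅ := by
          ext z
          simp only [hT, Set.mem_preimage, Set.mem_setOf_eq, Set.mem_empty_iff_false,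
            iff_false]
          rintro ⟨⟨hy01, hyt⟩, -⟩
          exact hy ⟨hyt, hy01.2⟩
        rw [hpr, Set.indicator_of_notMem hy]
        simp
    rw [lintegral_congr hslice, lintegral_indicator measurableSet_Icc]
    have hig : IntegrableOn (fun y => Gpoly θ (n+1) y) (Set.Icc (θ*t) 1) volume :=
      (Gpoly_cont θ (n+1)).integrableOn_Icc
    have hnn : 0 ≤ᵐ[volume.restrict (Set.Icc (θ*t) 1)] (fun y => Gpoly θ (n+1) y) :=
      (ae_restrict_iff' measurableSet_Icc).mpr (ae_of_all _ fun y hy =>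
        Gpoly_nonneg θ h0 h1 (n+1) y ⟨le_trans hθt0 hy.1, hy.2⟩)
    rw [← MeasureTheory.ofReal_integral_eq_lintegral_ofReal hig hnn]
    congr 1
    rw [MeasureTheory.integral_Icc_eq_integral_Ioc, ← intervalIntegral.integral_of_le hθt1]
    exact Gpoly_integral θ t (n+1)

lemma phiR_eq_Sw (θ : ℝ) (ℓ : ℕ) :
    phiR θ (ℓ+1) = Sw (fun j => -(θ ^ (j * (j-1) / 2)) / (j.factorial : ℝ)) (ℓ+1) (ℓ+2) (ℓ+1) := by
  rw [phiR, Sw]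
  refine Finset.sum_bij' (fun r _ => fun k => (r k).1)
    (fun r' hr' => fun k => (⟨r' k, by
      have h := (Finset.mem_filter.mp hr').1
      rw [Fintype.mem_piFinset] at h
      simpa using h k⟩ : Fin (ℓ+2)))
    ?_ ?_ ?_ ?_ ?_
  · intro r hr
    refine Finset.mem_filter.mpr ⟨Fintype.mem_piFinset.mpr fun i => Finset.mem_range.mpr (r i).2, ?_⟩
    exact (Finset.mem_filter.mp hr).2
  · intro r' hr'
    refine Finset.mem_filter.mpr ⟨Finset.mem_univ _, ?_⟩
    exact (Finset.mem_filter.mp hr').2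
  · intro r hr; funext k; rfl
  · intro r' hr'; funext k; rfl
  · intro r hr
    rw [multR]
    congr 1

theorem combinatorial_formula_a0 (θ : ℝ) (hθ : θ ∈ Icc (0 : ℝ) 1) :
    ∀ ℓ : ℕ, 1 ≤ ℓ → persprob 0 θ (ℓ - 1) = (-1) ^ ℓ * phiR θ ℓ := by
  obtain ⟨h0, h1⟩ := hθ
  intro ℓ hℓ
  obtain ⟨m, rfl⟩ : ∃ m, ℓ = m + 1 := ⟨ℓ - 1, by omega⟩
  have hL : persprob 0 θ (m + 1 - 1) = cw (gcoef θ) (m+1) := by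
    simp only [Nat.add_sub_cancel]
    match m with
    | 0 =>
      rw [persprob]
      simp [cw, gcoef]
    | (n+1) =>
      rw [persprob]
      have hset : {x : Fin (n + 2) → ℝ |
          (∀ i, x i ∈ Icc (-(0:ℝ)) 1) ∧
          ∀ i : Fin (n + 1), θ * x i.castSucc ≤ x i.succ} = Vset θ 0 (n+1) := by
        ext x
        simp only [Set.mem_setOf_eq, Vset, neg_zero, mul_zero]
        constructor
        · rintro ⟨ha, hb⟩
          exact ⟨ha, (ha 0).1, hb⟩
        · rintro ⟨ha, -, hb⟩
          exact ⟨ha, hb⟩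
      rw [hset, Vset_volume θ h0 h1 (n+1) 0 (by norm_num)]
      rw [ENNReal.toReal_ofReal (Gpoly_nonneg θ h0 h1 (n+2) 0 (by norm_num))]
      rw [Gpoly_at_zero]
      norm_num
  rw [hL, phiR_eq_Sw θ m, Sw_eq _ (m+1) (m+1) (m+2) le_rfl (by omega)]
  have hx : gcoef θ = fun j => (-1:ℝ)^j * (-(θ ^ (j * (j-1) / 2)) / (j.factorial : ℝ)) := by
    funext j
    rw [gcoef, pow_succ]
    ring
  rw [hx, cw_sign]
end
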